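/- arXiv:1509.07040 — 2 statements merged into one kernel-verified Lean document; each statement's English description precedes it below -/
import Mathlib

section
/- Let f : 𝒳ⁿ → ℝ satisfy the bounded differences condition with constants c_i, i.e., changing the i-th coordinate changes f by at most c_i. If X = (X₁,...,Xₙ) are i.i.d. with law p, then for every ε > 0, P(f(X) − E[f(X)] > ε) ≤ exp(−2ε²/Σᵢ cᵢ²). (McDiarmid's inequality.) -/
/-!
Split off the first coordinate, `x = (y, z)`, and let `g z = ∫ f (y, z) dp(y)`, so that
`f - E f = (f - g) + (g - E g)`. For fixed `z`, `y ↦ f (y, z)` ranges over an interval of length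
`c₀`, so by Hoeffding's lemma `f - g` is sub-Gaussian with parameter `c₀² / 4` under `p`. The
average `g` inherits the bounded differences `c₁, …`, so by induction `g - E g` is sub-Gaussian
with parameter `∑_{i ≥ 1} cᵢ² / 4`. Fubini turns the fibrewise mgf bound into the sum of the two
parameters, and the Chernoff bound for parameter `∑ cᵢ² / 4` is the claimed tail.
-/

open MeasureTheory ProbabilityTheory Real
open scoped NNReal

namespace ProbabilityTheory.HasSubgaussianMGF

variable {α β : Type*} [MeasurableSpace α] [MeasurableSpace β] {μ : Measure α} {ν : Measure β}
  [IsProbabilityMeasure μ] [IsProbabilityMeasure ν]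

lemma add_prod_of_forall {X : α × β → ℝ} {Y : β → ℝ} {cX cY : ℝ≥0}
    (hXm : AEMeasurable X (μ.prod ν))
    (hX : ∀ b, HasSubgaussianMGF (fun a => X (a, b)) cX μ) (hY : HasSubgaussianMGF Y cY ν) :
    HasSubgaussianMGF (fun ω => X ω + Y ω.2) (cX + cY) (μ.prod ν) := by
  have hfiber_le (t : ℝ) (b : β) :
      ∫ a, exp (t * (X (a, b) + Y b)) ∂μ ≤ exp (cX * t ^ 2 / 2) * exp (t * Y b) := by
    simp_rw [mul_add, exp_add, integral_mul_const]
    gcongr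
    exact (hX b).mgf_le t
  have hint (t : ℝ) : Integrable (fun ω => exp (t * (X ω + Y ω.2))) (μ.prod ν) := by
    have hm : AEStronglyMeasurable (fun ω => exp (t * (X ω + Y ω.2))) (μ.prod ν) :=
      ((hXm.add hY.aemeasurable.comp_snd).const_mul t).exp.aestronglyMeasurable
    refine (integrable_prod_iff' hm).2 ⟨ae_of_all _ fun b => ?_, ?_⟩
    · simp_rw [mul_add, exp_add]
      exact ((hX b).integrable_exp_mul t).mul_const _
    · refine ((hY.integrable_exp_mul t).const_mul (exp (cX * t ^ 2 / 2))).mono'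
        hm.norm.prod_swap.integral_prod_right' (ae_of_all _ fun b => ?_)
      simp only [norm_of_nonneg (exp_nonneg _)]
      exact (norm_of_nonneg (integral_nonneg fun _ => exp_nonneg _)).trans_le (hfiber_le t b)
  refine ⟨hint, fun t => ?_⟩
  calc mgf (fun ω => X ω + Y ω.2) (μ.prod ν) t
      = ∫ b, ∫ a, exp (t * (X (a, b) + Y b)) ∂μ ∂ν := integral_prod_symm _ (hint t)
    _ ≤ ∫ b, exp (cX * t ^ 2 / 2) * exp (t * Y b) ∂ν :=
        integral_mono (hint t).integral_prod_right ((hY.integrable_exp_mul t).const_mul _)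
          (hfiber_le t)
    _ = exp (cX * t ^ 2 / 2) * mgf Y ν t := integral_const_mul _ _
    _ ≤ exp (cX * t ^ 2 / 2) * exp (cY * t ^ 2 / 2) := by gcongr; exact hY.mgf_le t
    _ = exp (↑(cX + cY) * t ^ 2 / 2) := by rw [← exp_add]; push_cast; ring_nf

end ProbabilityTheory.HasSubgaussianMGF

lemma exists_forall_mem_Icc_of_sub_le {ι : Type*} [Nonempty ι] {h : ι → ℝ} {c : ℝ}
    (hh : ∀ i j, h i - h j ≤ c) : ∃ a, ∀ i, h i ∈ Set.Icc a (a + c) := by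
  inhabit ι
  have hbdd : BddBelow (Set.range h) :=
    ⟨h default - c, by rintro _ ⟨j, rfl⟩; linarith [hh default j]⟩
  refine ⟨⨅ j, h j, fun i => ⟨ciInf_le hbdd i, ?_⟩⟩
  have : h i - c ≤ ⨅ j, h j := le_ciInf fun j => by linarith [hh i j]
  linarith

lemma ProbabilityTheory.hasSubgaussianMGF_sub_integral_of_sub_le {Ω : Type*}
    [MeasurableSpace Ω] {μ : Measure Ω} [IsProbabilityMeasure μ] {X : Ω → ℝ}
    (hX : AEMeasurable X μ) {c : ℝ} (h : ∀ ω ω', X ω - X ω' ≤ c) :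
    HasSubgaussianMGF (fun ω => X ω - μ[X]) ((‖c‖₊ / 2) ^ 2) μ := by
  have := nonempty_of_isProbabilityMeasure μ
  obtain ⟨a, ha⟩ := exists_forall_mem_Icc_of_sub_le h
  simpa using hasSubgaussianMGF_of_mem_Icc hX (ae_of_all _ ha)

section FinCons

variable {𝒳 : Type*} [MeasurableSpace 𝒳] {n : ℕ}

lemma MeasurableEquiv.coe_piFinSuccAbove_zero_symm :
    ⇑(MeasurableEquiv.piFinSuccAbove (fun _ : Fin (n + 1) => 𝒳) 0).symm =
      fun w => Fin.cons w.1 w.2 := by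
  ext w
  simp [Fin.consEquiv]

lemma measurable_finCons :
    Measurable fun w : 𝒳 × (Fin n → 𝒳) => (Fin.cons w.1 w.2 : Fin (n + 1) → 𝒳) := by
  rw [← MeasurableEquiv.coe_piFinSuccAbove_zero_symm]
  exact MeasurableEquiv.measurable _

variable (p : Measure 𝒳) [SigmaFinite p]

lemma integral_pi_succ_eq_integral_prod (X : (Fin (n + 1) → 𝒳) → ℝ) :
    ∫ x, X x ∂Measure.pi (fun _ => p) =
      ∫ w, X (Fin.cons w.1 w.2) ∂p.prod (Measure.pi fun _ => p) := by
  rw [← (measurePreserving_piFinSuccAbove (fun _ => p) 0).symm.integral_comp',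
    MeasurableEquiv.coe_piFinSuccAbove_zero_symm]

lemma ProbabilityTheory.HasSubgaussianMGF.pi_succ_of_prod {X : (Fin (n + 1) → 𝒳) → ℝ}
    {c : ℝ≥0}
    (h : HasSubgaussianMGF (fun w => X (Fin.cons w.1 w.2)) c (p.prod (Measure.pi fun _ => p))) :
    HasSubgaussianMGF X c (Measure.pi fun _ => p) := by
  have he := measurePreserving_piFinSuccAbove (fun _ : Fin (n + 1) => p) 0
  convert HasSubgaussianMGF.of_map he.measurable.aemeasurable (he.map_eq ▸ h) using 1
  ext x
  simp

end FinCons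

def HasBoundedDifferences {ι 𝒳 : Type*} [DecidableEq ι] (f : (ι → 𝒳) → ℝ) (c : ι → ℝ) : Prop :=
  ∀ (i : ι) (x : ι → 𝒳) (x' : 𝒳), |f x - f (Function.update x i x')| ≤ c i

namespace HasBoundedDifferences

variable {𝒳 : Type*}

lemma integral {ι Ω : Type*} [DecidableEq ι] [MeasurableSpace Ω] {μ : Measure Ω}
    [IsProbabilityMeasure μ] {F : Ω → (ι → 𝒳) → ℝ} {c : ι → ℝ}
    (hF : ∀ ω, HasBoundedDifferences (F ω) c) (hint : ∀ x, Integrable (fun ω => F ω x) μ) :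
    HasBoundedDifferences (fun x => ∫ ω, F ω x ∂μ) c := by
  intro i x x'
  rw [← integral_sub (hint x) (hint _)]
  simpa using norm_integral_le_of_norm_le_const
    (ae_of_all μ fun ω => (Real.norm_eq_abs _).trans_le (hF ω i x x'))

section Cons

variable {n : ℕ} {f : (Fin (n + 1) → 𝒳) → ℝ} {c : Fin (n + 1) → ℝ}

lemma comp_cons (hf : HasBoundedDifferences f c) (y : 𝒳) :
    HasBoundedDifferences (fun z => f (Fin.cons y z)) (fun i => c i.succ) := by
  intro i z x'
  simp only [Fin.cons_update]
  exact hf _ _ _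

lemma cons_sub_cons_le (hf : HasBoundedDifferences f c) (y y' : 𝒳) (z : Fin n → 𝒳) :
    f (Fin.cons y z) - f (Fin.cons y' z) ≤ c 0 := by
  simpa [Fin.update_cons_zero] using (le_abs_self _).trans (hf 0 (Fin.cons y z) y')

end Cons

theorem hasSubgaussianMGF_sub_integral [MeasurableSpace 𝒳] (p : Measure 𝒳)
    [IsProbabilityMeasure p] {n : ℕ} {f : (Fin n → 𝒳) → ℝ} {c : Fin n → ℝ}
    (hf : Measurable f) (hbd : HasBoundedDifferences f c) :
    HasSubgaussianMGF (fun x => f x - ∫ y, f y ∂Measure.pi fun _ => p)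
      (∑ i, (‖c i‖₊ / 2) ^ 2) (Measure.pi fun _ => p) := by
  induction n with
  | zero =>
    have hzero (x : Fin 0 → 𝒳) : f x - ∫ y, f y ∂Measure.pi (fun _ => p) = 0 := by
      simp [integral_unique, Subsingleton.elim x default]
    simp [hzero]
  | succ n ih =>
    set μ := Measure.pi fun _ : Fin n => p
    let F : 𝒳 × (Fin n → 𝒳) → ℝ := fun w => f (Fin.cons w.1 w.2)
    have hF : Measurable F := hf.comp measurable_finCons
    let g : (Fin n → 𝒳) → ℝ := fun z => ∫ y, F (y, z) ∂p
    have hg : Measurable g := hF.stronglyMeasurable.integral_prod_left'.measurable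
    have hfiber (z : Fin n → 𝒳) :
        HasSubgaussianMGF (fun y => F (y, z) - g z) ((‖c 0‖₊ / 2) ^ 2) p :=
      hasSubgaussianMGF_sub_integral_of_sub_le (hF.comp measurable_prodMk_right).aemeasurable
        fun y y' => hbd.cons_sub_cons_le y y' z
    have hFint (z : Fin n → 𝒳) : Integrable (fun y => F (y, z)) p :=
      ((hfiber z).integrable.add (integrable_const (g z))).congr
        (ae_of_all _ fun y => sub_add_cancel _ _)
    have htail := ih hg (integral (fun y => hbd.comp_cons y) hFint)
    have hsum : HasSubgaussianMGF (fun w => F w - ∫ z, g z ∂μ)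
        ((‖c 0‖₊ / 2) ^ 2 + ∑ i : Fin n, (‖c i.succ‖₊ / 2) ^ 2) (p.prod μ) :=
      (HasSubgaussianMGF.add_prod_of_forall (X := fun w => F w - g w.2)
        (hF.sub (hg.comp measurable_snd)).aemeasurable hfiber htail).congr
        (ae_of_all _ fun w => sub_add_sub_cancel _ _ _)
    have hmean : ∫ x, f x ∂Measure.pi (fun _ => p) = ∫ z, g z ∂μ := by
      have hFint : Integrable F (p.prod μ) :=
        (hsum.integrable.add (integrable_const _)).congr (ae_of_all _ fun w => sub_add_cancel _ _)
      rw [integral_pi_succ_eq_integral_prod, integral_prod_symm F hFint]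
    rw [Fin.sum_univ_succ, hmean]
    exact hsum.pi_succ_of_prod p

end HasBoundedDifferences

theorem mcdiarmid_general {𝒳 : Type*} [MeasurableSpace 𝒳] (n : ℕ)
    (p : Measure 𝒳) [IsProbabilityMeasure p]
    (f : (Fin n → 𝒳) → ℝ) (hf : Measurable f)
    (c : Fin n → ℝ)
    (hbdd : ∀ (i : Fin n) (x : Fin n → 𝒳) (x' : 𝒳),
      |f x - f (Function.update x i x')| ≤ c i)
    (ε : ℝ) (hε : 0 < ε) :
    (Measure.pi fun _ : Fin n => p)
        {x | f x - ∫ y, f y ∂(Measure.pi fun _ : Fin n => p) > ε}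
      ≤ ENNReal.ofReal (Real.exp (-2 * ε ^ 2 / ∑ i, c i ^ 2)) := by
  have htail :=
    (HasBoundedDifferences.hasSubgaussianMGF_sub_integral p hf hbdd).measure_ge_le hε.le
  have hparam : -ε ^ 2 / (2 * ((∑ i, (‖c i‖₊ / 2) ^ 2 : ℝ≥0) : ℝ)) =
      -2 * ε ^ 2 / ∑ i, c i ^ 2 := by
    push_cast
    simp_rw [Real.norm_eq_abs, div_pow, sq_abs, ← Finset.sum_div]
    ring
  rw [← hparam]
  calc _ ≤ (Measure.pi fun _ : Fin n => p) {x | ε ≤ f x - ∫ y, f y ∂(Measure.pi fun _ => p)} :=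
        measure_mono (Set.ofPred_subset_ofPred.2 fun _ hx => hx.le)
    _ = _ := (ofReal_measureReal (measure_ne_top _ _)).symm
    _ ≤ _ := ENNReal.ofReal_le_ofReal htail

/-- McDiarmid's inequality: if `f` has the bounded differences property with
constants `c i`, and `X₁,…,Xₙ` are i.i.d. with law `p`, then
`P(f(X) − E[f(X)] > ε) ≤ exp(−2ε²/Σ cᵢ²)`. -/
theorem mcdiarmid {𝒳 : Type*} [MeasurableSpace 𝒳] (n : ℕ)
    (p : Measure 𝒳) [IsProbabilityMeasure p]
    (f : (Fin n → 𝒳) → ℝ) (hf : Measurable f)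
    (c : Fin n → ℝ) (hc : ∀ i, 0 ≤ c i)
    (hbdd : ∀ (i : Fin n) (x : Fin n → 𝒳) (x' : 𝒳),
      |f x - f (Function.update x i x')| ≤ c i)
    (ε : ℝ) (hε : 0 < ε) :
    (Measure.pi fun _ : Fin n => p)
        {x | f x - ∫ y, f y ∂(Measure.pi fun _ : Fin n => p) > ε}
      ≤ ENNReal.ofReal (Real.exp (-2 * ε ^ 2 / ∑ i, c i ^ 2)) :=
  mcdiarmid_general n p f hf c hbdd ε hε
end

section
/- Let Z₁, Z₂, ... be i.i.d. real random variables with E[Z₁] > 0 and finite moment generating function E[e^{λZ₁}] for all λ ∈ ℝ. Then limₙ −(1/n)·log P(Σ_{k=1}^n Z_k ≤ 0) = sup_λ [−log E[e^{λ Z₁}]] (Cramér's theorem at threshold 0, lower-tail, for mean-positive variables); in particular P(Σ Z_k ≤ 0) ≤ exp(−n·sup_λ(−κ(λ))) for all n, where κ(λ) = log E[e^{λZ₁}]. -/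
/-!
Write `κ = cgf (Z 0) P`, `I = ⨆ t, -κ t` and `Sₙ = Z 0 + ⋯ + Z (n-1)`. By independence
`E[exp (t Sₙ)] = exp (n κ t)`, so Chernoff's bound gives `P (Sₙ ≤ 0) ≤ exp (n κ t)` for `t ≤ 0`;
for `t ≥ 0` this holds trivially because `κ t ≥ t E[Z 0] ≥ 0` by Jensen. Hence the rate
`-(1/n) log P (Sₙ ≤ 0)` is at least `I`.

For the converse, if `Z 0 ≥ 0` a.s. then `P (Sₙ ≤ 0) ≥ P (Z 0 ≤ 0)ⁿ` while `κ t → log P (Z 0 ≤ 0)`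
as `t → -∞`. Otherwise `κ'` is negative somewhere on `(-∞, 0)` and positive at `0`, so by the
intermediate value theorem there are `t ≤ 0` with `κ' t < 0` and `t κ' t` arbitrarily small.
Tilting by `exp (t Sₙ)` at such `t` gives `P (Sₙ ≤ 0) ≥ exp (n (κ t - 2 t κ' t)) / 2` for large `n`,
so the limsup of the rate is at most `2 t κ' t - κ t ≤ I + 2 t κ' t`.
-/

open MeasureTheory ProbabilityTheory Filter Real Set Finset Topology
open scoped ENNReal

namespace ProbabilityTheory

section OneVariable

variable {Ω : Type*} [MeasurableSpace Ω] {μ : Measure Ω} {X : Ω → ℝ} {t : ℝ}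

lemma mem_interior_integrableExpSet (hX : ∀ t, Integrable (fun ω ↦ exp (t * X ω)) μ) (t : ℝ) :
    t ∈ interior (integrableExpSet X μ) := by
  simp [show integrableExpSet X μ = univ from eq_univ_of_forall hX]

lemma analyticOnNhd_cgf_univ (hX : ∀ t, Integrable (fun ω ↦ exp (t * X ω)) μ) :
    AnalyticOnNhd ℝ (cgf X μ) univ :=
  fun t _ ↦ analyticAt_cgf (mem_interior_integrableExpSet hX t)

lemma exp_mul_integral_le_mgf [IsProbabilityMeasure μ] (hXi : Integrable X μ)
    (ht : Integrable (fun ω ↦ exp (t * X ω)) μ) : exp (t * μ[X]) ≤ mgf X μ t := by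
  rw [← integral_const_mul]
  exact convexOn_exp.map_integral_le continuous_exp.continuousOn isClosed_univ
    (.of_forall fun _ ↦ mem_univ _) (hXi.const_mul t) ht

lemma tilted_mul_apply_le [SFinite μ] (ht : t ≤ 0)
    (htX : Integrable (fun ω ↦ exp (t * X ω)) μ) {a : ℝ} {s : Set Ω} (hs : ∀ ω ∈ s, a ≤ X ω) :
    μ.tilted (t * X ·) s ≤ ENNReal.ofReal (exp (t * a - cgf X μ t)) * μ s := by
  rw [tilted_mul_apply_cgf s htX, ← setLIntegral_const]
  refine setLIntegral_mono measurable_const fun ω hω ↦ ?_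
  exact ENNReal.ofReal_le_ofReal (exp_le_exp.2 (by nlinarith [hs ω hω]))

/-- With `κ = cgf X μ`: under the tilted law `μ.tilted (t * X ·)` the variable `X` has mean
`m = κ'(t)` and variance `κ''(t)`, so by Chebyshev it lies in `(2m, 0)` with probability at least
`1 - κ''(t) / m²`; on that event the density `dμ / dμ.tilted = exp (κ(t) - t X)` is at least
`exp (κ(t) - 2 t m)`. -/
lemma exp_mul_one_sub_le_measureReal_nonpos [IsProbabilityMeasure μ]
    (hX : ∀ t, Integrable (fun ω ↦ exp (t * X ω)) μ) (ht : t ≤ 0) (hm : deriv (cgf X μ) t < 0) :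
    exp (cgf X μ t - 2 * t * deriv (cgf X μ) t) *
        (1 - iteratedDeriv 2 (cgf X μ) t / deriv (cgf X μ) t ^ 2) ≤ μ.real {ω | X ω ≤ 0} := by
  set m := deriv (cgf X μ) t
  have htX := mem_interior_integrableExpSet hX t
  have : IsProbabilityMeasure (μ.tilted (t * X ·)) := isProbabilityMeasure_tilted (hX t)
  set B := {ω | |X ω - m| < -m}
  have hcheb : (μ.tilted (t * X ·)).real Bᶜ ≤ iteratedDeriv 2 (cgf X μ) t / m ^ 2 := by
    have h := meas_ge_le_variance_div_sq (memLp_tilted_mul htX 2) (neg_pos.2 hm)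
    rw [integral_tilted_mul_self htX, variance_tilted_mul htX, neg_sq] at h
    have hB : Bᶜ = {ω | -m ≤ |X ω - m|} := by ext; simp [B]
    have hv : 0 ≤ iteratedDeriv 2 (cgf X μ) t := by
      rw [← variance_tilted_mul htX]; exact variance_nonneg _ _
    rw [hB, measureReal_def]
    exact ENNReal.toReal_le_of_le_ofReal (by positivity) h
  have hcover : 1 ≤ (μ.tilted (t * X ·)).real B + (μ.tilted (t * X ·)).real Bᶜ := by
    simpa [union_compl_self] using measureReal_union_le (μ := μ.tilted (t * X ·)) B Bᶜ
  have hchange : (μ.tilted (t * X ·)).real B ≤ exp (t * (2 * m) - cgf X μ t) * μ.real B := by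
    have h := tilted_mul_apply_le (μ := μ) ht (hX t) (a := 2 * m) (s := B)
      fun ω (hω : |X ω - m| < -m) ↦ by linarith [abs_lt.1 hω]
    simpa [measureReal_def, ENNReal.toReal_mul, (exp_pos _).le] using
      ENNReal.toReal_mono (by finiteness) h
  have hsub : μ.real B ≤ μ.real {ω | X ω ≤ 0} :=
    measureReal_mono fun ω (hω : |X ω - m| < -m) ↦ show X ω ≤ 0 by linarith [abs_lt.1 hω]
  calc exp (cgf X μ t - 2 * t * m) * (1 - iteratedDeriv 2 (cgf X μ) t / m ^ 2)
      ≤ exp (cgf X μ t - 2 * t * m) * (μ.tilted (t * X ·)).real B := by gcongr; linarith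
    _ ≤ exp (cgf X μ t - 2 * t * m) * (exp (t * (2 * m) - cgf X μ t) * μ.real B) := by gcongr
    _ = μ.real B := by rw [← mul_assoc, ← exp_add]; ring_nf; simp
    _ ≤ μ.real {ω | X ω ≤ 0} := hsub

lemma exists_pos_measure_le_neg_ne_zero (hneg : μ {ω | X ω < 0} ≠ 0) :
    ∃ c > 0, μ {ω | X ω ≤ -c} ≠ 0 := by
  by_contra! h
  refine hneg (measure_mono_null (t := ⋃ n : ℕ, {ω | X ω ≤ -(1 / (n + 1))}) ?_
    (measure_iUnion_null fun n ↦ h _ (by positivity)))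
  intro ω (hω : X ω < 0)
  obtain ⟨n, hn⟩ := exists_nat_one_div_lt (neg_pos.2 hω)
  exact mem_iUnion.2 ⟨n, show X ω ≤ -(1 / (n + 1)) by linarith⟩

/-- If `cgf X μ` were nondecreasing on `(-∞, 0]`, then `mgf X μ t ≤ 1` there, and the Chernoff
bound `μ {X ≤ -c} ≤ exp (c t) mgf X μ t` would force `μ {X ≤ -c} = 0` as `t → -∞`. -/
lemma exists_neg_deriv_cgf_neg [IsProbabilityMeasure μ]
    (hX : ∀ t, Integrable (fun ω ↦ exp (t * X ω)) μ) (hneg : μ {ω | X ω < 0} ≠ 0) :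
    ∃ t < 0, deriv (cgf X μ) t < 0 := by
  by_contra! hderiv
  obtain ⟨c, hc, hXc⟩ := exists_pos_measure_le_neg_ne_zero hneg
  have hκ := analyticOnNhd_cgf_univ hX
  have hmono : MonotoneOn (cgf X μ) (Iic 0) :=
    monotoneOn_of_deriv_nonneg (convex_Iic 0) (hκ.continuousOn.mono (subset_univ _))
      (hκ.differentiableOn.mono (subset_univ _)) fun t ht ↦ hderiv t (by simpa using ht)
  have hbound : ∀ t ≤ 0, μ.real {ω | X ω ≤ -c} ≤ exp (t * c) := fun t ht ↦ by
    have hmgf : mgf X μ t ≤ 1 := by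
      rw [← exp_cgf (hX t), ← exp_zero, ← cgf_zero (X := X) (μ := μ)]
      exact exp_le_exp.2 (hmono ht (mem_Iic.2 le_rfl) ht)
    calc μ.real {ω | X ω ≤ -c} ≤ exp (-t * -c) * mgf X μ t := measure_le_le_exp_mul_mgf _ ht (hX t)
      _ ≤ exp (t * c) := by rw [neg_mul_neg]; exact mul_le_of_le_one_right (exp_pos _).le hmgf
  have hlim : Tendsto (fun t ↦ exp (t * c)) atBot (𝓝 0) :=
    tendsto_exp_atBot.comp (tendsto_id.atBot_mul_const hc)
  refine hXc ((measureReal_eq_zero_iff).1 (le_antisymm ?_ measureReal_nonneg))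
  exact ge_of_tendsto hlim ((eventually_le_atBot 0).mono hbound)

lemma exists_deriv_cgf_neg_mul_lt [IsProbabilityMeasure μ]
    (hX : ∀ t, Integrable (fun ω ↦ exp (t * X ω)) μ) (hmean : 0 < μ[X])
    (hneg : μ {ω | X ω < 0} ≠ 0) {δ : ℝ} (hδ : 0 < δ) :
    ∃ t ≤ 0, deriv (cgf X μ) t < 0 ∧ t * deriv (cgf X μ) t < δ := by
  obtain ⟨t₀, ht₀, hm₀⟩ := exists_neg_deriv_cgf_neg hX hneg
  have hm0 : deriv (cgf X μ) 0 = μ[X] := by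
    simpa using deriv_cgf_zero (mem_interior_integrableExpSet hX 0)
  obtain ⟨η, hm₀η, hη, ht₀η⟩ : ∃ η, deriv (cgf X μ) t₀ ≤ η ∧ η < 0 ∧ t₀ * η ≤ δ / 2 := by
    refine ⟨max (deriv (cgf X μ) t₀ / 2) (δ / (2 * t₀)), le_max_of_le_left (by linarith),
      max_lt (by linarith) (div_neg_of_pos_of_neg hδ (by linarith)), ?_⟩
    calc t₀ * max (deriv (cgf X μ) t₀ / 2) (δ / (2 * t₀)) ≤ t₀ * (δ / (2 * t₀)) :=
          mul_le_mul_of_nonpos_left (le_max_right _ _) ht₀.le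
      _ = δ / 2 := by field_simp [ht₀.ne]
  obtain ⟨t, ⟨ht₀t, ht0⟩, hηt⟩ := intermediate_value_Icc ht₀.le
    ((analyticOnNhd_cgf_univ hX).deriv.continuousOn.mono (subset_univ _))
    ⟨hm₀η, by rw [hm0]; linarith⟩
  refine ⟨t, ht0, hηt ▸ hη, ?_⟩
  have : (t - t₀) * η ≤ 0 := mul_nonpos_of_nonneg_of_nonpos (by linarith) hη.le
  rw [hηt]
  linarith

lemma tendsto_mgf_atBot_of_nonneg [IsFiniteMeasure μ] (hXm : Measurable X) (hX : 0 ≤ᵐ[μ] X) :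
    Tendsto (mgf X μ) atBot (𝓝 (μ.real {ω | X ω ≤ 0})) := by
  rw [← integral_indicator_one (measurableSet_le hXm measurable_const)]
  refine tendsto_integral_filter_of_dominated_convergence (fun _ ↦ 1)
    (.of_forall fun t ↦ (hXm.const_mul t).exp.aestronglyMeasurable) ?_ (integrable_const 1) ?_
  · filter_upwards [eventually_le_atBot 0] with t ht
    filter_upwards [hX] with ω hω
    rw [norm_of_nonneg (exp_pos _).le, exp_le_one_iff]
    exact mul_nonpos_of_nonpos_of_nonneg ht hω
  · filter_upwards [hX] with ω hω
    rcases hω.eq_or_lt with h | h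
    · simp [← h]
    · simpa [indicator_of_notMem (show ω ∉ {ω | X ω ≤ 0} from not_le.2 h)] using
        tendsto_id.atBot_mul_const h

end OneVariable

section IID

variable {Ω : Type*} [MeasurableSpace Ω] {P : Measure Ω} {Z : ℕ → Ω → ℝ}

noncomputable def lowerTailRate (P : Measure Ω) (Z : ℕ → Ω → ℝ) (n : ℕ) : ℝ :=
  -(1 / n) * log (P.real {ω | ∑ k ∈ range n, Z k ω ≤ 0})

lemma mgf_sum_range_eq_pow (hmeas : ∀ i, Measurable (Z i)) (hindep : iIndepFun Z P)
    (hident : ∀ i, IdentDistrib (Z i) (Z 0) P P) (n : ℕ) (t : ℝ) :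
    mgf (fun ω ↦ ∑ k ∈ range n, Z k ω) P t = mgf (Z 0) P t ^ n := by
  rw [show (fun ω ↦ ∑ k ∈ range n, Z k ω) = ∑ k ∈ range n, Z k by ext; simp,
    hindep.mgf_sum hmeas, prod_congr rfl fun k _ ↦ mgf_congr_of_identDistrib _ _ (hident k) t,
    prod_const, card_range]

lemma cgf_sum_range_eq_mul (hmeas : ∀ i, Measurable (Z i)) (hindep : iIndepFun Z P)
    (hident : ∀ i, IdentDistrib (Z i) (Z 0) P P) (n : ℕ) :
    cgf (fun ω ↦ ∑ k ∈ range n, Z k ω) P = fun t ↦ n * cgf (Z 0) P t := by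
  ext t
  rw [cgf, mgf_sum_range_eq_pow hmeas hindep hident, log_pow, cgf]

lemma integrable_exp_mul_sum_range [IsFiniteMeasure P] (hmeas : ∀ i, Measurable (Z i))
    (hindep : iIndepFun Z P) (hident : ∀ i, IdentDistrib (Z i) (Z 0) P P)
    (hmgf : ∀ t, Integrable (fun ω ↦ exp (t * Z 0 ω)) P) (n : ℕ) (t : ℝ) :
    Integrable (fun ω ↦ exp (t * ∑ k ∈ range n, Z k ω)) P := by
  simpa using hindep.integrable_exp_mul_sum hmeas (s := range n) fun k _ ↦
    ((hident k).comp (measurable_const_mul t).exp).integrable_iff.2 (hmgf t)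

lemma measureReal_sum_range_nonpos_le_mgf_pow [IsProbabilityMeasure P]
    (hmeas : ∀ i, Measurable (Z i)) (hindep : iIndepFun Z P)
    (hident : ∀ i, IdentDistrib (Z i) (Z 0) P P)
    (hmgf : ∀ t, Integrable (fun ω ↦ exp (t * Z 0 ω)) P) (hmean : 0 ≤ P[Z 0]) (n : ℕ) (t : ℝ) :
    P.real {ω | ∑ k ∈ range n, Z k ω ≤ 0} ≤ mgf (Z 0) P t ^ n := by
  rcases le_total t 0 with ht | ht
  · simpa [mgf_sum_range_eq_pow hmeas hindep hident] using
      measure_le_le_exp_mul_mgf 0 ht (integrable_exp_mul_sum_range hmeas hindep hident hmgf n t)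
  · have hXi := integrable_of_mem_interior_integrableExpSet (mem_interior_integrableExpSet hmgf 0)
    calc P.real {ω | ∑ k ∈ range n, Z k ω ≤ 0} ≤ 1 := measureReal_le_one
      _ ≤ mgf (Z 0) P t ^ n := one_le_pow₀ <| (one_le_exp (mul_nonneg ht hmean)).trans
          (exp_mul_integral_le_mgf hXi (hmgf t))

lemma measureReal_nonpos_pow_le_measureReal_sum_range_nonpos [IsFiniteMeasure P]
    (hindep : iIndepFun Z P) (hident : ∀ i, IdentDistrib (Z i) (Z 0) P P) (n : ℕ) :
    P.real {ω | Z 0 ω ≤ 0} ^ n ≤ P.real {ω | ∑ k ∈ range n, Z k ω ≤ 0} := by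
  have hsame : ∀ k, P (Z k ⁻¹' Iic 0) = P {ω | Z 0 ω ≤ 0} := fun k ↦
    (hident k).measure_mem_eq measurableSet_Iic
  have h : P {ω | Z 0 ω ≤ 0} ^ n ≤ P {ω | ∑ k ∈ range n, Z k ω ≤ 0} :=
    calc P {ω | Z 0 ω ≤ 0} ^ n = ∏ k ∈ range n, P (Z k ⁻¹' Iic 0) := by simp [hsame]
      _ = P (⋂ k ∈ range n, Z k ⁻¹' Iic 0) :=
        (hindep.meas_biInter fun k _ ↦ ⟨Iic 0, measurableSet_Iic, rfl⟩).symm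
      _ ≤ P {ω | ∑ k ∈ range n, Z k ω ≤ 0} :=
        measure_mono fun ω hω ↦ sum_nonpos fun k hk ↦ by simpa using mem_iInter₂.1 hω k hk
  simpa [measureReal_def, ENNReal.toReal_pow] using ENNReal.toReal_mono (measure_ne_top _ _) h

lemma exp_mul_one_sub_le_measureReal_sum_range_nonpos [IsProbabilityMeasure P]
    (hmeas : ∀ i, Measurable (Z i)) (hindep : iIndepFun Z P)
    (hident : ∀ i, IdentDistrib (Z i) (Z 0) P P)
    (hmgf : ∀ t, Integrable (fun ω ↦ exp (t * Z 0 ω)) P) {t : ℝ} (ht : t ≤ 0)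
    (hm : deriv (cgf (Z 0) P) t < 0) {n : ℕ} (hn : n ≠ 0) :
    exp (n * (cgf (Z 0) P t - 2 * t * deriv (cgf (Z 0) P) t)) *
        (1 - iteratedDeriv 2 (cgf (Z 0) P) t / deriv (cgf (Z 0) P) t ^ 2 / n) ≤
      P.real {ω | ∑ k ∈ range n, Z k ω ≤ 0} := by
  have hcgf := cgf_sum_range_eq_mul hmeas hindep hident n
  have hn' : (0 : ℝ) < n := by positivity
  have h := exp_mul_one_sub_le_measureReal_nonpos (X := fun ω ↦ ∑ k ∈ range n, Z k ω)
    (integrable_exp_mul_sum_range hmeas hindep hident hmgf n) ht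
    (by rw [hcgf, deriv_const_mul_field']; exact mul_neg_of_pos_of_neg hn' hm)
  rw [hcgf, deriv_const_mul_field', iteratedDeriv_const_mul_field] at h
  convert h using 2
  · ring_nf
  · field_simp

lemma neg_cgf_le_lowerTailRate [IsProbabilityMeasure P]
    (hmeas : ∀ i, Measurable (Z i)) (hindep : iIndepFun Z P)
    (hident : ∀ i, IdentDistrib (Z i) (Z 0) P P)
    (hmgf : ∀ t, Integrable (fun ω ↦ exp (t * Z 0 ω)) P) (hmean : 0 ≤ P[Z 0]) {n : ℕ}
    (hn : n ≠ 0) (hpos : 0 < P.real {ω | ∑ k ∈ range n, Z k ω ≤ 0}) (t : ℝ) :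
    -cgf (Z 0) P t ≤ lowerTailRate P Z n := by
  have h := log_le_log hpos
    (measureReal_sum_range_nonpos_le_mgf_pow hmeas hindep hident hmgf hmean n t)
  rw [log_pow] at h
  rw [lowerTailRate, neg_mul, neg_le_neg_iff, one_div, inv_mul_le_iff₀ (by positivity)]
  exact h

lemma neg_cgf_le_lowerTailRate_of_measureReal_nonpos_pos [IsProbabilityMeasure P]
    (hmeas : ∀ i, Measurable (Z i)) (hindep : iIndepFun Z P)
    (hident : ∀ i, IdentDistrib (Z i) (Z 0) P P)
    (hmgf : ∀ t, Integrable (fun ω ↦ exp (t * Z 0 ω)) P) (hmean : 0 ≤ P[Z 0])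
    (hq : 0 < P.real {ω | Z 0 ω ≤ 0}) (n : ℕ) (hn : n ≠ 0) (t : ℝ) :
    -cgf (Z 0) P t ≤ lowerTailRate P Z n :=
  neg_cgf_le_lowerTailRate hmeas hindep hident hmgf hmean hn
    ((pow_pos hq n).trans_le
      (measureReal_nonpos_pow_le_measureReal_sum_range_nonpos hindep hident n))
    t

lemma lowerTailRate_le_neg_log [IsFiniteMeasure P] (hindep : iIndepFun Z P)
    (hident : ∀ i, IdentDistrib (Z i) (Z 0) P P) {n : ℕ} (hn : n ≠ 0)
    (hq : 0 < P.real {ω | Z 0 ω ≤ 0}) :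
    lowerTailRate P Z n ≤ -log (P.real {ω | Z 0 ω ≤ 0}) := by
  have h := log_le_log (pow_pos hq n)
    (measureReal_nonpos_pow_le_measureReal_sum_range_nonpos hindep hident n)
  rw [log_pow] at h
  rw [lowerTailRate, neg_mul, neg_le_neg_iff, one_div, le_inv_mul_iff₀ (by positivity)]
  exact h

lemma eventually_lowerTailRate_lt [IsProbabilityMeasure P]
    (hmeas : ∀ i, Measurable (Z i)) (hindep : iIndepFun Z P)
    (hident : ∀ i, IdentDistrib (Z i) (Z 0) P P)
    (hmgf : ∀ t, Integrable (fun ω ↦ exp (t * Z 0 ω)) P) {t : ℝ} (ht : t ≤ 0)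
    (hm : deriv (cgf (Z 0) P) t < 0) {b : ℝ}
    (hb : 2 * t * deriv (cgf (Z 0) P) t - cgf (Z 0) P t < b) :
    ∀ᶠ n in atTop, lowerTailRate P Z n < b := by
  set c := 2 * t * deriv (cgf (Z 0) P) t - cgf (Z 0) P t
  set v := iteratedDeriv 2 (cgf (Z 0) P) t / deriv (cgf (Z 0) P) t ^ 2
  have hc : Tendsto (fun n : ℕ ↦ c + log 2 / n) atTop (𝓝 c) := by
    simpa using tendsto_const_nhds.add (tendsto_const_div_atTop_nhds_zero_nat (log 2))
  have hv : Tendsto (fun n : ℕ ↦ v / n) atTop (𝓝 0) := tendsto_const_div_atTop_nhds_zero_nat v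
  filter_upwards [hc.eventually (gt_mem_nhds hb), hv.eventually (gt_mem_nhds one_half_pos),
    eventually_ne_atTop 0] with n hcb hvn hn
  have hn' : (0 : ℝ) < n := by positivity
  have hlow : exp (-(n * c)) / 2 ≤ P.real {ω | ∑ k ∈ range n, Z k ω ≤ 0} := by
    refine le_trans ?_
      (exp_mul_one_sub_le_measureReal_sum_range_nonpos hmeas hindep hident hmgf ht hm hn)
    rw [div_eq_mul_one_div, show -(n * c) = n * (cgf (Z 0) P t - 2 * t * deriv (cgf (Z 0) P) t)
      by ring]
    gcongr
    linarith
  have hlog := log_le_log (by positivity) hlow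
  rw [log_div (exp_pos _).ne' two_ne_zero, log_exp] at hlog
  calc lowerTailRate P Z n = -log (P.real {ω | ∑ k ∈ range n, Z k ω ≤ 0}) / n := by
        rw [lowerTailRate]; ring
    _ ≤ (n * c + log 2) / n := by gcongr; linarith
    _ = c + log 2 / n := by field_simp
    _ < b := hcb

lemma tendsto_lowerTailRate_of_measure_neg_eq_zero [IsProbabilityMeasure P]
    (hmeas : ∀ i, Measurable (Z i)) (hindep : iIndepFun Z P)
    (hident : ∀ i, IdentDistrib (Z i) (Z 0) P P)
    (hmgf : ∀ t, Integrable (fun ω ↦ exp (t * Z 0 ω)) P) (hneg : P {ω | Z 0 ω < 0} = 0) :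
    Tendsto (lowerTailRate P Z) atTop (𝓝 (⨆ t, -cgf (Z 0) P t)) := by
  have hnonneg : 0 ≤ᵐ[P] Z 0 := by
    simpa [EventuallyLE, ae_iff, not_le] using hneg
  have hmean : 0 ≤ P[Z 0] := integral_nonneg_of_ae hnonneg
  have hM := tendsto_mgf_atBot_of_nonneg (hmeas 0) hnonneg
  have hchernoff := measureReal_sum_range_nonpos_le_mgf_pow hmeas hindep hident hmgf hmean
  rcases (measureReal_nonneg (μ := P) (s := {ω | Z 0 ω ≤ 0})).eq_or_lt with hq | hq
  · -- `log 0 = 0` and the supremum of an unbounded family is `0`, so both sides vanish.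
    have hzero : ∀ n ≠ 0, P.real {ω | ∑ k ∈ range n, Z k ω ≤ 0} = 0 := fun n hn ↦
      le_antisymm (by simpa [← hq, zero_pow hn] using ge_of_tendsto' (hM.pow n) (hchernoff n))
        measureReal_nonneg
    have hM' : Tendsto (mgf (Z 0) P) atBot (𝓝[>] 0) :=
      tendsto_nhdsWithin_iff.2 ⟨hq ▸ hM, .of_forall fun t ↦ mgf_pos (hmgf t)⟩
    have hI : ⨆ t, -cgf (Z 0) P t = 0 :=
      Real.iSup_of_not_bddAbove <| not_bddAbove_of_tendsto_atTop <|
        tendsto_neg_atBot_atTop.comp (tendsto_log_nhdsGT_zero.comp hM')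
    rw [hI]
    refine tendsto_const_nhds.congr' ?_
    filter_upwards [eventually_ne_atTop 0] with n hn
    simp [lowerTailRate, hzero n hn]
  · have hle :=
      neg_cgf_le_lowerTailRate_of_measureReal_nonpos_pos hmeas hindep hident hmgf hmean hq
    have hbdd : BddAbove (range fun t ↦ -cgf (Z 0) P t) :=
      ⟨_, forall_mem_range.2 (hle 1 one_ne_zero)⟩
    have hI : -log (P.real {ω | Z 0 ω ≤ 0}) ≤ ⨆ t, -cgf (Z 0) P t :=
      le_of_tendsto (hM.log hq.ne').neg (.of_forall fun t ↦ le_ciSup hbdd t)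
    refine tendsto_const_nhds.congr' ?_
    filter_upwards [eventually_ne_atTop 0] with n hn
    exact le_antisymm (ciSup_le (hle n hn))
      ((lowerTailRate_le_neg_log hindep hident hn hq).trans hI)

lemma tendsto_lowerTailRate_of_measure_neg_ne_zero [IsProbabilityMeasure P]
    (hmeas : ∀ i, Measurable (Z i)) (hindep : iIndepFun Z P)
    (hident : ∀ i, IdentDistrib (Z i) (Z 0) P P)
    (hmgf : ∀ t, Integrable (fun ω ↦ exp (t * Z 0 ω)) P) (hmean : 0 < P[Z 0])
    (hneg : P {ω | Z 0 ω < 0} ≠ 0) :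
    Tendsto (lowerTailRate P Z) atTop (𝓝 (⨆ t, -cgf (Z 0) P t)) := by
  have hq : 0 < P.real {ω | Z 0 ω ≤ 0} :=
    ENNReal.toReal_pos (fun h ↦ hneg (measure_mono_null (fun ω (hω : Z 0 ω < 0) ↦ hω.le) h))
      (measure_ne_top _ _)
  have hle :=
    neg_cgf_le_lowerTailRate_of_measureReal_nonpos_pos hmeas hindep hident hmgf hmean.le hq
  have hbdd : BddAbove (range fun t ↦ -cgf (Z 0) P t) :=
    ⟨_, forall_mem_range.2 (hle 1 one_ne_zero)⟩
  refine tendsto_order.2 ⟨fun b hb ↦ ?_, fun b hb ↦ ?_⟩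
  · filter_upwards [eventually_ne_atTop 0] with n hn using hb.trans_le (ciSup_le (hle n hn))
  · obtain ⟨t, ht, hm, htm⟩ := exists_deriv_cgf_neg_mul_lt hmgf hmean hneg
      (δ := (b - ⨆ t, -cgf (Z 0) P t) / 2) (by linarith)
    exact eventually_lowerTailRate_lt hmeas hindep hident hmgf ht hm
      (by linarith [le_ciSup hbdd t])

lemma measure_sum_range_nonpos_le_exp [IsProbabilityMeasure P]
    (hmeas : ∀ i, Measurable (Z i)) (hindep : iIndepFun Z P)
    (hident : ∀ i, IdentDistrib (Z i) (Z 0) P P)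
    (hmgf : ∀ t, Integrable (fun ω ↦ exp (t * Z 0 ω)) P) (hmean : 0 ≤ P[Z 0]) (n : ℕ) :
    P {ω | ∑ k ∈ range n, Z k ω ≤ 0} ≤
      ENNReal.ofReal (exp (-(n : ℝ) * ⨆ t, -cgf (Z 0) P t)) := by
  rcases eq_or_ne n 0 with rfl | hn
  · simp
  rcases (measureReal_nonneg (μ := P) (s := {ω | ∑ k ∈ range n, Z k ω ≤ 0})).eq_or_lt
    with hzero | hpos
  · simp [(measureReal_eq_zero_iff).1 hzero.symm]
  rw [← ofReal_measureReal]
  gcongr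
  have hI := ciSup_le (neg_cgf_le_lowerTailRate hmeas hindep hident hmgf hmean hn hpos)
  rw [← log_le_iff_le_exp hpos]
  have h := mul_le_mul_of_nonneg_left hI (Nat.cast_nonneg n)
  rw [lowerTailRate, show (n : ℝ) * (-(1 / n) * log (P.real {ω | ∑ k ∈ range n, Z k ω ≤ 0})) =
    -log (P.real {ω | ∑ k ∈ range n, Z k ω ≤ 0}) by field_simp] at h
  linarith

end IID

end ProbabilityTheory

/-- Cramér's theorem at threshold 0 for i.i.d. mean-positive variables with
everywhere-finite mgf: the lower tail `P(Σ Zₖ ≤ 0)` has exponential rate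
`sup_λ (−κ(λ))`, and the Chernoff bound
`P(Σ Zₖ ≤ 0) ≤ exp(−n·sup_λ(−κ(λ)))` holds for all `n`. -/
theorem cramer_chernoff_zero {Ω : Type*} [MeasurableSpace Ω] (P : Measure Ω) [IsProbabilityMeasure P]
    (Z : ℕ → Ω → ℝ) (hmeas : ∀ i, Measurable (Z i))
    (hindep : ProbabilityTheory.iIndepFun Z P)
    (hident : ∀ i, ProbabilityTheory.IdentDistrib (Z i) (Z 0) P P)
    (hmgf : ∀ l : ℝ, Integrable (fun ω => Real.exp (l * Z 0 ω)) P)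
    (hmean : 0 < ∫ ω, Z 0 ω ∂P) :
    Tendsto (fun n : ℕ => -(1 / (n : ℝ)) *
        Real.log ((P {ω | ∑ k ∈ Finset.range n, Z k ω ≤ 0}).toReal))
      atTop
      (nhds (⨆ l : ℝ, -(Real.log (∫ ω, Real.exp (l * Z 0 ω) ∂P)))) ∧
    ∀ n : ℕ, P {ω | ∑ k ∈ Finset.range n, Z k ω ≤ 0} ≤
      ENNReal.ofReal (Real.exp (-(n : ℝ) *
        ⨆ l : ℝ, -(Real.log (∫ ω, Real.exp (l * Z 0 ω) ∂P)))) := by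
  refine ⟨?_, measure_sum_range_nonpos_le_exp hmeas hindep hident hmgf hmean.le⟩
  rcases eq_or_ne (P {ω | Z 0 ω < 0}) 0 with hneg | hneg
  · exact tendsto_lowerTailRate_of_measure_neg_eq_zero hmeas hindep hident hmgf hneg
  · exact tendsto_lowerTailRate_of_measure_neg_ne_zero hmeas hindep hident hmgf hmean
      hneg
end
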